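/- Let η(y) = (1/√(2π)) e^{−y²/2} be the standard Gaussian density and c_{j,m} the coefficients from the recursion c_{1,1} = −1, c_{j,m} = (2j/(m−1) − 4) c_{j,m−1} 1_{j<m} + (2/(m−1)) c_{j−1,m−1} 1_{j>1}. Then for every m ≥ 1 and y ∈ ℝ, (−1)^{m−1} Σ_{j=1}^m c_{j,m} y^j η^{(j)}(y) = −c_{m,m} y^{2m} η(y). In particular this quantity is nonnegative for all y. -/

import Mathlib

/-- The coefficients `c_{j,m}`: `c_{1,1} = −1` and for `m ≥ 2`,
`c_{j,m} = (2j/(m−1) − 4)·c_{j,m−1}·1_{j<m} + (2/(m−1))·c_{j−1,m−1}·1_{j>1}`. -/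
noncomputable def cCoef : ℕ → ℕ → ℝ
  | _, 0 => 0
  | j, 1 => if j = 1 then -1 else 0
  | j, m + 2 =>
      (if j < m + 2 then (2 * (j : ℝ) / ((m : ℝ) + 1) - 4) * cCoef j (m + 1) else 0)
      + (if 1 < j then 2 / ((m : ℝ) + 1) * cCoef (j - 1) (m + 1) else 0)

/-- The standard Gaussian density. -/
noncomputable def gaussDensity (y : ℝ) : ℝ := (Real.sqrt (2 * Real.pi))⁻¹ * Real.exp (-y ^ 2 / 2)

lemma gauss_pos (y : ℝ) : 0 < gaussDensity y := by
  unfold gaussDensity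
  positivity

lemma gauss_contDiff : ContDiff ℝ (⊤ : ℕ∞) gaussDensity := by
  unfold gaussDensity
  exact contDiff_const.mul (Real.contDiff_exp.comp (((contDiff_id.pow 2).neg).div_const 2))

lemma gauss_hasDerivAt (y : ℝ) : HasDerivAt gaussDensity (-y * gaussDensity y) y := by
  have h : HasDerivAt (fun y : ℝ => -y ^ 2 / 2) (-y) y := by
    have := ((hasDerivAt_pow 2 y).neg).div_const 2
    refine this.congr_deriv ?_
    norm_num
    ring
  have h2 := (h.exp).const_mul (Real.sqrt (2 * Real.pi))⁻¹
  unfold gaussDensity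
  refine h2.congr_deriv ?_
  ring

lemma hD (j : ℕ) (y : ℝ) :
    HasDerivAt (iteratedDeriv j gaussDensity) (iteratedDeriv (j + 1) gaussDensity y) y := by
  rw [iteratedDeriv_succ]
  exact ((gauss_contDiff.differentiable_iteratedDeriv j (by exact_mod_cast ENat.coe_lt_top j)) y).hasDerivAt

lemma ckk_nonpos (k : ℕ) : cCoef (k + 1) (k + 1) ≤ 0 := by
  induction k with
  | zero => simp [cCoef]
  | succ k ih =>
      have : cCoef (k + 2) (k + 2) = 2 / ((k : ℝ) + 1) * cCoef (k + 1) (k + 1) := by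
        show cCoef (k + 2) (k + 2) = _
        rw [cCoef]
        simp
      rw [this]
      have hk : (0:ℝ) < (k:ℝ) + 1 := by positivity
      exact mul_nonpos_of_nonneg_of_nonpos (by positivity) ih

lemma key (k : ℕ) : ∀ y : ℝ,
    ∑ i ∈ Finset.range (k + 1),
        cCoef (i + 1) (k + 1) * y ^ (i + 1) * iteratedDeriv (i + 1) gaussDensity y
      = (-1 : ℝ) ^ (k + 1) * cCoef (k + 1) (k + 1) * y ^ (2 * (k + 1)) * gaussDensity y := by
  induction k with
  | zero =>
      intro y
      have h1 : iteratedDeriv 1 gaussDensity y = -y * gaussDensity y := by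
        rw [iteratedDeriv_one]
        exact (gauss_hasDerivAt y).deriv
      simp [cCoef, h1]
      ring
  | succ k ih =>
      intro y
      set c1 : ℝ := (-1 : ℝ) ^ (k + 1) * cCoef (k + 1) (k + 1) with hc1
      -- derivative of the sum, termwise
      have h1 : HasDerivAt
          (fun y : ℝ => ∑ i ∈ Finset.range (k + 1),
            cCoef (i + 1) (k + 1) * y ^ (i + 1) * iteratedDeriv (i + 1) gaussDensity y)
          (∑ i ∈ Finset.range (k + 1),
            (cCoef (i + 1) (k + 1) * (((i:ℝ) + 1) * y ^ i) * iteratedDeriv (i + 1) gaussDensity y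
              + cCoef (i + 1) (k + 1) * y ^ (i + 1) * iteratedDeriv (i + 2) gaussDensity y)) y := by
        apply HasDerivAt.fun_sum
        intro i _
        have hp := ((hasDerivAt_pow (i + 1) y).const_mul (cCoef (i + 1) (k + 1))).fun_mul (hD (i + 1) y)
        refine hp.congr_deriv ?_
        push_cast
        simp
      -- derivative of the closed form
      have h2 : HasDerivAt
          (fun y : ℝ => c1 * y ^ (2 * (k + 1)) * gaussDensity y)
          (c1 * ((2 * (k:ℝ) + 2) * y ^ (2 * k + 1)) * gaussDensity y
            + c1 * y ^ (2 * (k + 1)) * (-y * gaussDensity y)) y := by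
        have hp := ((hasDerivAt_pow (2 * (k + 1)) y).const_mul c1).mul (gauss_hasDerivAt y)
        rw [show 2 * (k + 1) - 1 = 2 * k + 1 from by omega] at hp
        refine hp.congr_deriv ?_
        push_cast
        ring
      have hfun : (fun y : ℝ => ∑ i ∈ Finset.range (k + 1),
            cCoef (i + 1) (k + 1) * y ^ (i + 1) * iteratedDeriv (i + 1) gaussDensity y)
          = fun y : ℝ => c1 * y ^ (2 * (k + 1)) * gaussDensity y := funext ih
      rw [hfun] at h1
      have h12 := h1.unique h2
      -- now the algebra
      have hexp : ∀ i ∈ Finset.range (k + 2),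
          cCoef (i + 1) (k + 2) * y ^ (i + 1) * iteratedDeriv (i + 1) gaussDensity y
            = ((if i + 1 < k + 2 then (2 * ((i:ℝ)+1) / ((k : ℝ) + 1) - 4) * cCoef (i+1) (k + 1) else 0)
              + (if 1 < i + 1 then 2 / ((k : ℝ) + 1) * cCoef i (k + 1) else 0))
              * y ^ (i + 1) * iteratedDeriv (i + 1) gaussDensity y := by
        intro i _
        congr 2
        show cCoef (i + 1) (k + 2) = _
        rw [cCoef]
        push_cast
        simp
      rw [Finset.sum_congr rfl hexp]
      have hsplit : ∑ i ∈ Finset.range (k + 2),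
          ((if i + 1 < k + 2 then (2 * ((i:ℝ)+1) / ((k : ℝ) + 1) - 4) * cCoef (i+1) (k + 1) else 0)
              + (if 1 < i + 1 then 2 / ((k : ℝ) + 1) * cCoef i (k + 1) else 0))
              * y ^ (i + 1) * iteratedDeriv (i + 1) gaussDensity y
          = (∑ i ∈ Finset.range (k + 2),
              (if i + 1 < k + 2 then (2 * ((i:ℝ)+1) / ((k : ℝ) + 1) - 4) * cCoef (i+1) (k + 1) else 0)
              * y ^ (i + 1) * iteratedDeriv (i + 1) gaussDensity y)
            + (∑ i ∈ Finset.range (k + 2),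
              (if 1 < i + 1 then 2 / ((k : ℝ) + 1) * cCoef i (k + 1) else 0)
              * y ^ (i + 1) * iteratedDeriv (i + 1) gaussDensity y) := by
        rw [← Finset.sum_add_distrib]
        exact Finset.sum_congr rfl fun i _ => by ring
      rw [hsplit]
      have hA : (∑ i ∈ Finset.range (k + 2),
              (if i + 1 < k + 2 then (2 * ((i:ℝ)+1) / ((k : ℝ) + 1) - 4) * cCoef (i+1) (k + 1) else 0)
              * y ^ (i + 1) * iteratedDeriv (i + 1) gaussDensity y)
          = ∑ i ∈ Finset.range (k + 1),
              ((2 * ((i:ℝ)+1) / ((k : ℝ) + 1) - 4) * cCoef (i+1) (k + 1))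
              * y ^ (i + 1) * iteratedDeriv (i + 1) gaussDensity y := by
        rw [Finset.sum_range_succ]
        rw [if_neg (by omega)]
        rw [zero_mul, zero_mul, add_zero]
        exact Finset.sum_congr rfl fun i hi => by
          rw [if_pos (by simpa using Finset.mem_range.mp hi)]
      have hB : (∑ i ∈ Finset.range (k + 2),
              (if 1 < i + 1 then 2 / ((k : ℝ) + 1) * cCoef i (k + 1) else 0)
              * y ^ (i + 1) * iteratedDeriv (i + 1) gaussDensity y)
          = ∑ i ∈ Finset.range (k + 1),
              (2 / ((k : ℝ) + 1) * cCoef (i+1) (k + 1))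
              * y ^ (i + 2) * iteratedDeriv (i + 2) gaussDensity y := by
        rw [Finset.sum_range_succ']
        rw [if_neg (by omega)]
        rw [zero_mul, zero_mul, add_zero]
        exact Finset.sum_congr rfl fun i _ => by
          rw [if_pos (by omega)]
      rw [hA, hB, ← Finset.sum_add_distrib]
      have hcomb : ∀ i ∈ Finset.range (k + 1),
          ((2 * ((i:ℝ)+1) / ((k : ℝ) + 1) - 4) * cCoef (i+1) (k + 1))
              * y ^ (i + 1) * iteratedDeriv (i + 1) gaussDensity y
            + (2 / ((k : ℝ) + 1) * cCoef (i+1) (k + 1))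
              * y ^ (i + 2) * iteratedDeriv (i + 2) gaussDensity y
          = (2 / ((k : ℝ) + 1) * y) *
              (cCoef (i + 1) (k + 1) * (((i:ℝ) + 1) * y ^ i) * iteratedDeriv (i + 1) gaussDensity y
                + cCoef (i + 1) (k + 1) * y ^ (i + 1) * iteratedDeriv (i + 2) gaussDensity y)
            - 4 * (cCoef (i + 1) (k + 1) * y ^ (i + 1) * iteratedDeriv (i + 1) gaussDensity y) := by
        intro i _
        ring
      rw [Finset.sum_congr rfl hcomb, Finset.sum_sub_distrib, ← Finset.mul_sum, ← Finset.mul_sum,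
        h12, ih y]
      have hkk : cCoef (k + 2) (k + 2) = 2 / ((k : ℝ) + 1) * cCoef (k + 1) (k + 1) := by
        show cCoef (k + 2) (k + 2) = _
        rw [cCoef]
        simp
      rw [hkk, hc1]
      have hk0 : ((k : ℝ) + 1) ≠ 0 := by positivity
      rw [show 2 * (k + 1 + 1) = 2 * k + 1 + 1 + 1 + 1 from by omega,
        show 2 * (k + 1) = 2 * k + 1 + 1 from by omega, pow_succ, pow_succ, pow_succ,
        pow_succ ((-1:ℝ)) (k+1)]
      field_simp
      ring


/-- For the standard Gaussian density `η`,
`(−1)^{m−1} Σ_{j=1}^m c_{j,m} y^j η^{(j)}(y) = −c_{m,m} y^{2m} η(y)`, and this quantity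
is nonnegative. -/
theorem stmt_7 (m : ℕ) (hm : 1 ≤ m) (y : ℝ) :
    (-1 : ℝ) ^ (m - 1) *
        ∑ j ∈ Finset.Icc 1 m, cCoef j m * y ^ j * iteratedDeriv j gaussDensity y
      = -(cCoef m m) * y ^ (2 * m) * gaussDensity y ∧
    0 ≤ (-1 : ℝ) ^ (m - 1) *
        ∑ j ∈ Finset.Icc 1 m, cCoef j m * y ^ j * iteratedDeriv j gaussDensity y := by
  obtain ⟨k, rfl⟩ : ∃ k, m = k + 1 := ⟨m - 1, by omega⟩
  have hsum : ∑ j ∈ Finset.Icc 1 (k + 1), cCoef j (k + 1) * y ^ j * iteratedDeriv j gaussDensity y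
      = (-1 : ℝ) ^ (k + 1) * cCoef (k + 1) (k + 1) * y ^ (2 * (k + 1)) * gaussDensity y := by
    rw [← Finset.Ico_add_one_right_eq_Icc, Finset.sum_Ico_eq_sum_range]
    simp only [Nat.succ_sub_one, Nat.add_sub_cancel]
    rw [← key k y]
    exact Finset.sum_congr rfl fun i _ => by rw [add_comm 1 i]
  have heq : (-1 : ℝ) ^ (k + 1 - 1) *
        ∑ j ∈ Finset.Icc 1 (k + 1), cCoef j (k + 1) * y ^ j * iteratedDeriv j gaussDensity y
      = -(cCoef (k + 1) (k + 1)) * y ^ (2 * (k + 1)) * gaussDensity y := by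
    rw [hsum, Nat.add_sub_cancel, pow_succ]
    have h1 : ((-1 : ℝ)) ^ (k * 2) = 1 := by rw [pow_mul', neg_one_sq, one_pow]
    ring_nf
    rw [h1]
    ring
  exact ⟨heq, heq ▸ by
    apply mul_nonneg (mul_nonneg _ ((even_two_mul _).pow_nonneg y)) (gauss_pos y).le
    simpa using ckk_nonpos k⟩
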